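/- Assume Sen : Set → Set preserves coequalizers (e.g., Sen is a left adjoint or preserves colimits). Then the category Sys of components has coequalizers: given parallel component morphisms τ, τ' : C₁ ⇉ C₂, the coequalizer q : ⟨P₂,A₂,E₂⟩ → ⟨Q_P,Q_A,Q_E⟩ in Sig of the underlying signature morphisms, equipped with the component structure given by direct images (π(qa) = ⋃{Sen(q_P)(π₂(a')) : q_A(a') = q_A(a)}, and analogously for δ and ε), is a coequalizer of τ and τ' in Sys. -/

import Mathlib

open CategoryTheory

/-- A component over a sentence functor `Sen`. -/
structure Component (Sen : Type ⥤ Type) where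
  P : Type
  A : Type
  E : Type
  pres : A → Set (Sen.obj P)
  desc : A → Set (Sen.obj P)
  obs : E → Set A

/-- A component morphism. -/
structure CompHom {Sen : Type ⥤ Type} (C₁ C₂ : Component Sen) where
  σP : C₁.P → C₂.P
  σA : C₁.A → C₂.A
  σE : C₁.E → C₂.E
  hpres : ∀ a, Sen.map (TypeCat.ofHom σP) '' C₁.pres a ⊆ C₂.pres (σA a)
  hdesc : ∀ a, Sen.map (TypeCat.ofHom σP) '' C₁.desc a ⊆ C₂.desc (σA a)
  hobs : ∀ e, σA '' C₁.obs e ⊆ C₂.obs (σE e)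

@[ext] theorem CompHom.ext' {Sen : Type ⥤ Type} {C₁ C₂ : Component Sen}
    {f g : CompHom C₁ C₂} (h1 : f.σP = g.σP) (h2 : f.σA = g.σA) (h3 : f.σE = g.σE) :
    f = g := by
  cases f; cases g; simp_all

def CompHom.id {Sen : Type ⥤ Type} (C : Component Sen) : CompHom C C where
  σP := _root_.id
  σA := _root_.id
  σE := _root_.id
  hpres := by
    intro a x hx
    obtain ⟨y, hy, rfl⟩ := hx
    have : Sen.map (TypeCat.ofHom (_root_.id : C.P → C.P)) y = y := by
      rw [show TypeCat.ofHom (_root_.id : C.P → C.P) = 𝟙 C.P from rfl]; simp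
    rwa [this]
  hdesc := by
    intro a x hx
    obtain ⟨y, hy, rfl⟩ := hx
    have : Sen.map (TypeCat.ofHom (_root_.id : C.P → C.P)) y = y := by
      rw [show TypeCat.ofHom (_root_.id : C.P → C.P) = 𝟙 C.P from rfl]; simp
    rwa [this]
  hobs := by intro e x hx; simpa using hx

def CompHom.comp {Sen : Type ⥤ Type} {C₁ C₂ C₃ : Component Sen}
    (f : CompHom C₁ C₂) (g : CompHom C₂ C₃) : CompHom C₁ C₃ where
  σP := g.σP ∘ f.σP
  σA := g.σA ∘ f.σA
  σE := g.σE ∘ f.σE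
  hpres := by
    intro a x hx
    obtain ⟨y, hy, rfl⟩ := hx
    have hmap : Sen.map (TypeCat.ofHom (g.σP ∘ f.σP)) y =
        Sen.map (TypeCat.ofHom g.σP) (Sen.map (TypeCat.ofHom f.σP) y) := by
      rw [show TypeCat.ofHom (g.σP ∘ f.σP) = TypeCat.ofHom f.σP ≫ TypeCat.ofHom g.σP from rfl]
      simp
    rw [hmap]
    exact g.hpres (f.σA a) ⟨_, f.hpres a ⟨y, hy, rfl⟩, rfl⟩
  hdesc := by
    intro a x hx
    obtain ⟨y, hy, rfl⟩ := hx
    have hmap : Sen.map (TypeCat.ofHom (g.σP ∘ f.σP)) y =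
        Sen.map (TypeCat.ofHom g.σP) (Sen.map (TypeCat.ofHom f.σP) y) := by
      rw [show TypeCat.ofHom (g.σP ∘ f.σP) = TypeCat.ofHom f.σP ≫ TypeCat.ofHom g.σP from rfl]
      simp
    rw [hmap]
    exact g.hdesc (f.σA a) ⟨_, f.hdesc a ⟨y, hy, rfl⟩, rfl⟩
  hobs := by
    intro e x hx
    obtain ⟨y, hy, rfl⟩ := hx
    exact g.hobs (f.σE e) ⟨_, f.hobs e ⟨y, hy, rfl⟩, rfl⟩

instance Sys.category (Sen : Type ⥤ Type) : Category (Component Sen) where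
  Hom := CompHom
  id := CompHom.id
  comp := CompHom.comp
  id_comp := by intros; rfl
  comp_id := by intros; rfl
  assoc := by intros; rfl

open Limits

/-- The component structure on the coequalizer signature `⟨QP, QA, QE⟩`, given
by direct images: `π(x) = ⋃ {Sen(qP)''(π₂(a')) : qA a' = x}`, and analogously
for `δ` and `ε`. -/
def coeqComp (Sen : Type ⥤ Type) (C₂ : Component Sen) {QP QA QE : Type}
    (qP : C₂.P → QP) (qA : C₂.A → QA) (qE : C₂.E → QE) : Component Sen where
  P := QP
  A := QA
  E := QE
  pres x := ⋃ a' ∈ {a' : C₂.A | qA a' = x}, Sen.map (TypeCat.ofHom qP) '' C₂.pres a'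
  desc x := ⋃ a' ∈ {a' : C₂.A | qA a' = x}, Sen.map (TypeCat.ofHom qP) '' C₂.desc a'
  obs x := ⋃ e' ∈ {e' : C₂.E | qE e' = x}, qA '' C₂.obs e'

/-! The direct-image structure is the least one making `q` a morphism, and a mediating signature
morphism `u` with `u ∘ q = h` respects it automatically: a sentence of `π(qA a)` is `Sen(qP)(s)` with
`s ∈ π₂(a')` and `qA a' = qA a`, and `Sen(uP)(Sen(qP) s) = Sen(hP) s ∈ π_D(hA a') = π_D(uA (qA a))`
by functoriality of `Sen`. Uniqueness of `u` is componentwise uniqueness in `Sig`. -/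

theorem Set.image_biUnion_fiber_subset {α β γ ι ι' κ : Type*} {S : ι → Set α} {T : κ → Set γ}
    {q : ι → ι'} {u : ι' → κ} {h : ι → κ} {f : α → β} {g : β → γ} {k : α → γ}
    (hu : ∀ i, u (q i) = h i) (hg : ∀ t, g (f t) = k t) (hS : ∀ i, k '' S i ⊆ T (h i))
    (x : ι') : g '' ⋃ i ∈ {i | q i = x}, f '' S i ⊆ T (u x) := by
  rintro _ ⟨_, hy, rfl⟩
  obtain ⟨i, rfl, t, ht, rfl⟩ := Set.mem_iUnion₂.mp hy
  rw [hg, hu]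
  exact hS i ⟨t, ht, rfl⟩

theorem CategoryTheory.Functor.map_ofHom_map_ofHom (F : Type ⥤ Type) {X Y Z : Type}
    (f : X → Y) (g : Y → Z) (x : F.obj X) :
    F.map (TypeCat.ofHom g) (F.map (TypeCat.ofHom f) x) = F.map (TypeCat.ofHom (g ∘ f)) x :=
  (F.map_comp_apply (TypeCat.ofHom f) (TypeCat.ofHom g) x).symm

namespace CompHom

variable {Sen : Type ⥤ Type} {C₂ D : Component Sen} {QP QA QE : Type}

def toCoeqComp (qP : C₂.P → QP) (qA : C₂.A → QA) (qE : C₂.E → QE) :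
    CompHom C₂ (coeqComp Sen C₂ qP qA qE) where
  σP := qP
  σA := qA
  σE := qE
  hpres _ := Set.subset_biUnion_of_mem (u := fun a' => _ '' C₂.pres a') rfl
  hdesc _ := Set.subset_biUnion_of_mem (u := fun a' => _ '' C₂.desc a') rfl
  hobs _ := Set.subset_biUnion_of_mem (u := fun e' => qA '' C₂.obs e') rfl

def descCoeqComp {qP : C₂.P → QP} {qA : C₂.A → QA} {qE : C₂.E → QE} (h : CompHom C₂ D)
    (uP : QP → D.P) (uA : QA → D.A) (uE : QE → D.E) (hP : uP ∘ qP = h.σP)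
    (hA : uA ∘ qA = h.σA) (hE : uE ∘ qE = h.σE) :
    CompHom (coeqComp Sen C₂ qP qA qE) D where
  σP := uP
  σA := uA
  σE := uE
  hpres := Set.image_biUnion_fiber_subset (congrFun hA)
    (fun t => (Sen.map_ofHom_map_ofHom qP uP t).trans (by rw [hP])) h.hpres
  hdesc := Set.image_biUnion_fiber_subset (congrFun hA)
    (fun t => (Sen.map_ofHom_map_ofHom qP uP t).trans (by rw [hP])) h.hdesc
  hobs := Set.image_biUnion_fiber_subset (congrFun hE) (congrFun hA) h.hobs

end CompHom

theorem sys_coequalizers_general (Sen : Type ⥤ Type)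
    {C₁ C₂ : Component Sen} (τ τ' : CompHom C₁ C₂)
    {QP QA QE : Type} (qP : C₂.P → QP) (qA : C₂.A → QA) (qE : C₂.E → QE)
    (hP : qP ∘ τ.σP = qP ∘ τ'.σP)
    (hPuniv : ∀ (T : Type) (h : C₂.P → T), h ∘ τ.σP = h ∘ τ'.σP →
      ∃! u : QP → T, u ∘ qP = h)
    (hA : qA ∘ τ.σA = qA ∘ τ'.σA)
    (hAuniv : ∀ (T : Type) (h : C₂.A → T), h ∘ τ.σA = h ∘ τ'.σA →
      ∃! u : QA → T, u ∘ qA = h)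
    (hE : qE ∘ τ.σE = qE ∘ τ'.σE)
    (hEuniv : ∀ (T : Type) (h : C₂.E → T), h ∘ τ.σE = h ∘ τ'.σE →
      ∃! u : QE → T, u ∘ qE = h) :
    ∃ q : CompHom C₂ (coeqComp Sen C₂ qP qA qE),
      q.σP = qP ∧ q.σA = qA ∧ q.σE = qE ∧
      τ.comp q = τ'.comp q ∧
      ∀ (D : Component Sen) (h : CompHom C₂ D), τ.comp h = τ'.comp h →
        ∃! u : CompHom (coeqComp Sen C₂ qP qA qE) D, q.comp u = h := by
  refine ⟨CompHom.toCoeqComp qP qA qE, rfl, rfl, rfl, CompHom.ext' hP hA hE, ?_⟩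
  intro D h hτ
  obtain ⟨uP, huP, huP_unique⟩ := hPuniv D.P h.σP (congrArg CompHom.σP hτ)
  obtain ⟨uA, huA, huA_unique⟩ := hAuniv D.A h.σA (congrArg CompHom.σA hτ)
  obtain ⟨uE, huE, huE_unique⟩ := hEuniv D.E h.σE (congrArg CompHom.σE hτ)
  refine ⟨h.descCoeqComp uP uA uE huP huA huE, CompHom.ext' huP huA huE, fun v hv => ?_⟩
  exact CompHom.ext' (huP_unique v.σP (congrArg CompHom.σP hv))
    (huA_unique v.σA (congrArg CompHom.σA hv)) (huE_unique v.σE (congrArg CompHom.σE hv))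

/-- if `Sen` preserves coequalizers, then given parallel component
morphisms `τ, τ' : C₁ ⇉ C₂` and a componentwise coequalizer `⟨qP, qA, qE⟩` of
their underlying signature morphisms in `Sig = Set³`, the signature morphism
`q`, equipped with the direct-image component structure on its target, is a
coequalizer of `τ` and `τ'` in `Sys`. -/
theorem sys_coequalizers (Sen : Type ⥤ Type)
    (hSen : Nonempty (PreservesColimitsOfShape WalkingParallelPair Sen))
    {C₁ C₂ : Component Sen} (τ τ' : CompHom C₁ C₂)
    {QP QA QE : Type} (qP : C₂.P → QP) (qA : C₂.A → QA) (qE : C₂.E → QE)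
    (hP : qP ∘ τ.σP = qP ∘ τ'.σP)
    (hPuniv : ∀ (T : Type) (h : C₂.P → T), h ∘ τ.σP = h ∘ τ'.σP →
      ∃! u : QP → T, u ∘ qP = h)
    (hA : qA ∘ τ.σA = qA ∘ τ'.σA)
    (hAuniv : ∀ (T : Type) (h : C₂.A → T), h ∘ τ.σA = h ∘ τ'.σA →
      ∃! u : QA → T, u ∘ qA = h)
    (hE : qE ∘ τ.σE = qE ∘ τ'.σE)
    (hEuniv : ∀ (T : Type) (h : C₂.E → T), h ∘ τ.σE = h ∘ τ'.σE →
      ∃! u : QE → T, u ∘ qE = h) :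
    ∃ q : CompHom C₂ (coeqComp Sen C₂ qP qA qE),
      q.σP = qP ∧ q.σA = qA ∧ q.σE = qE ∧
      τ.comp q = τ'.comp q ∧
      ∀ (D : Component Sen) (h : CompHom C₂ D), τ.comp h = τ'.comp h →
        ∃! u : CompHom (coeqComp Sen C₂ qP qA qE) D, q.comp u = h :=
  sys_coequalizers_general Sen τ τ' qP qA qE hP hPuniv hA hAuniv hE hEuniv
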